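/- In the ring A = ℝ[X,Y]/(X²+Y²−1), for every element a the norm N(a) = a·σ(a) (where σ is the A-algebra automorphism over ℝ[X] sending y to −y) is a polynomial in X whose degree is never equal to 1. -/
import Mathlib


open Polynomial

/-- In `A = ℝ[X,Y]/(X²+Y²−1)`, written over the basis `{1, y}` of the free
`ℝ[X]`-module `A`, the norm of `p(x) + y·q(x)` is `p² + (X²−1)·q²`; its degree
is never `1`. -/
theorem stmt_3 (p q : Polynomial ℝ) :
    (p ^ 2 + (Polynomial.X ^ 2 - 1) * q ^ 2).degree ≠ 1 := by
  intro h
  set f := p ^ 2 + (Polynomial.X ^ 2 - 1) * q ^ 2 with hf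
  have hnd : f.natDegree = 1 := Polynomial.natDegree_eq_of_degree_eq_some h
  obtain ⟨a, ha, b, hab⟩ := Polynomial.natDegree_eq_one.mp hnd
  have key : ∀ x : ℝ, 1 ≤ |x| → 0 ≤ f.eval x := by
    intro x hx
    have hx2 : 1 ≤ x ^ 2 := by
      have := sq_abs x
      nlinarith
    simp only [hf, eval_add, eval_mul, eval_pow, eval_sub, eval_one, eval_X]
    nlinarith [sq_nonneg (p.eval x), sq_nonneg (q.eval x)]
  have heval : ∀ x : ℝ, f.eval x = a * x + b := by
    intro x; rw [← hab]; simp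
  rcases lt_or_gt_of_ne ha with hneg | hpos
  · have hx : (1 : ℝ) ≤ |max 1 ((|b| + 1) / (-a))| := le_abs_self _ |>.trans' (le_max_left _ _)
    have h1 := key _ hx
    rw [heval] at h1
    have h2 : (|b| + 1) / (-a) ≤ max 1 ((|b| + 1) / (-a)) := le_max_right _ _
    have h3 : a * max 1 ((|b| + 1) / (-a)) ≤ -(|b| + 1) := by
      rw [div_le_iff₀ (by linarith)] at h2
      nlinarith
    have := abs_nonneg b
    have := le_abs_self b
    linarith
  · have hx : (1 : ℝ) ≤ |-(max 1 ((|b| + 1) / a))| := by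
      rw [abs_neg]; exact le_abs_self _ |>.trans' (le_max_left _ _)
    have h1 := key _ hx
    rw [heval] at h1
    have h2 : (|b| + 1) / a ≤ max 1 ((|b| + 1) / a) := le_max_right _ _
    have h3 : a * -(max 1 ((|b| + 1) / a)) ≤ -(|b| + 1) := by
      rw [div_le_iff₀ hpos] at h2
      nlinarith
    have := abs_nonneg b
    have := le_abs_self b
    linarith
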